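/- Let A₁ ∈ ℝ^{m×k}, A₂ ∈ ℝ^{m×(n−k)}, and let B₂ ∈ ℝ^{m×(n−k)} be any matrix with rank(A₁ B₂) ≤ r. Define B₂' := P_{A₁}(A₂) + P⊥_{A₁}(B₂). Then rank(A₁ B₂') ≤ r and ‖A₂ − B₂'‖_F ≤ ‖A₂ − B₂‖_F. (In the constrained low-rank approximation problem (2) one may without loss of generality replace the P_{A₁}-component of the second block by P_{A₁}(A₂).) -/

import Mathlib

open Matrix

/-- Frobenius norm of a real matrix. -/
noncomputable def frobNorm {m n : ℕ} (A : Matrix (Fin m) (Fin n) ℝ) : ℝ :=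
  Real.sqrt (∑ i, ∑ j, (A i j) ^ 2)

/-- Column space of a matrix, as a subspace of Euclidean space. -/
noncomputable def colSpace {m k : ℕ} (A : Matrix (Fin m) (Fin k) ℝ) :
    Submodule ℝ (EuclideanSpace ℝ (Fin m)) :=
  LinearMap.range (Matrix.toEuclideanLin A)

/-- `P_{A₁}`: orthogonal projection onto the column space of `A₁`, applied columnwise. -/
noncomputable def projCols {m k l : ℕ} (A₁ : Matrix (Fin m) (Fin k) ℝ)
    (B : Matrix (Fin m) (Fin l) ℝ) : Matrix (Fin m) (Fin l) ℝ :=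
  Matrix.of fun i j =>
    (Submodule.orthogonalProjectionOnto (colSpace A₁) (WithLp.toLp 2 (fun i' => B i' j)) : EuclideanSpace ℝ (Fin m)) i

/-- `P⊥_{A₁}`: orthogonal projection onto the orthogonal complement of the column
space of `A₁`, applied columnwise. -/
noncomputable def projOrthCols {m k l : ℕ} (A₁ : Matrix (Fin m) (Fin k) ℝ)
    (B : Matrix (Fin m) (Fin l) ℝ) : Matrix (Fin m) (Fin l) ℝ :=
  Matrix.of fun i j =>
    (Submodule.orthogonalProjectionOnto (colSpace A₁)ᗮ (WithLp.toLp 2 (fun i' => B i' j)) : EuclideanSpace ℝ (Fin m)) i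

/-!
Columnwise, with `a`, `b` the columns of `A₂`, `B₂` and `P` the projection onto the column
space of `A₁`, the new column is `P a + P⊥ b = b + P (a - b)`. As `P (a - b)` is a combination of
columns of `A₁`, the column space of `(A₁ B₂')` lies in that of `(A₁ B₂)`. Moreover
`a - (P a + P⊥ b) = P⊥ (a - b)`, which is no longer than `a - b`.
-/

namespace Matrix

variable {m n : Type*}

def euclideanCol (A : Matrix m n ℝ) (j : n) : EuclideanSpace ℝ m :=
  WithLp.toLp 2 (A.col j)

@[simp]
lemma euclideanCol_add (A B : Matrix m n ℝ) (j : n) :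
    euclideanCol (A + B) j = euclideanCol A j + euclideanCol B j := rfl

@[simp]
lemma euclideanCol_sub (A B : Matrix m n ℝ) (j : n) :
    euclideanCol (A - B) j = euclideanCol A j - euclideanCol B j := rfl

@[simp]
lemma euclideanCol_fromCols_inr {n₁ n₂ : Type*} (A : Matrix m n₁ ℝ) (B : Matrix m n₂ ℝ)
    (j : n₂) : euclideanCol (fromCols A B) (Sum.inr j) = euclideanCol B j := rfl

lemma range_euclideanCol_fromCols {n₁ n₂ : Type*} (A : Matrix m n₁ ℝ) (B : Matrix m n₂ ℝ) :
    Set.range (euclideanCol (fromCols A B)) =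
      Set.range (euclideanCol A) ∪ Set.range (euclideanCol B) := by
  have hcols : euclideanCol (fromCols A B) = Sum.elim (euclideanCol A) (euclideanCol B) := by
    funext j
    cases j <;> rfl
  rw [hcols, Set.Sum.elim_range]

variable [Fintype n]

lemma rank_eq_finrank_span_euclideanCol (A : Matrix m n ℝ) :
    A.rank = Module.finrank ℝ (Submodule.span ℝ (Set.range (euclideanCol A))) := by
  rw [A.rank_eq_finrank_span_cols, ← (WithLp.linearEquiv 2 ℝ (m → ℝ)).symm.finrank_map_eq,
    Submodule.map_span, ← Set.range_comp]
  rfl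

lemma rank_le_rank_of_euclideanCol_mem [Fintype m] {n' : Type*} [Fintype n'] {A : Matrix m n ℝ}
    {B : Matrix m n' ℝ}
    (h : ∀ j, euclideanCol A j ∈ Submodule.span ℝ (Set.range (euclideanCol B))) :
    A.rank ≤ B.rank := by
  rw [rank_eq_finrank_span_euclideanCol, rank_eq_finrank_span_euclideanCol]
  exact Submodule.finrank_mono (Submodule.span_le.mpr (Set.range_subset_iff.mpr h))

end Matrix

namespace Submodule

variable {E : Type*} [NormedAddCommGroup E] [InnerProductSpace ℝ E] (K : Submodule ℝ E)
  [K.HasOrthogonalProjection] (a b : E)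

lemma starProjection_add_starProjection_orthogonal_eq_add :
    K.starProjection a + Kᗮ.starProjection b = b + K.starProjection (a - b) := by
  rw [starProjection_orthogonal_val, map_sub]
  abel

lemma sub_starProjection_add_starProjection_orthogonal :
    a - (K.starProjection a + Kᗮ.starProjection b) = Kᗮ.starProjection (a - b) := by
  rw [starProjection_orthogonal_val, starProjection_orthogonal_val, map_sub]
  abel

end Submodule

section

variable {m k l : ℕ}

lemma colSpace_eq_span_euclideanCol (A : Matrix (Fin m) (Fin k) ℝ) :
    colSpace A = Submodule.span ℝ (Set.range (euclideanCol A)) := by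
  rw [colSpace, LinearMap.range_eq_map, ← (EuclideanSpace.basisFun (Fin k) ℝ).toBasis.span_eq,
    Submodule.map_span, ← Set.range_comp]
  congr 2
  ext j i
  simp [euclideanCol, Matrix.col]

lemma euclideanCol_projCols (A₁ : Matrix (Fin m) (Fin k) ℝ) (B : Matrix (Fin m) (Fin l) ℝ)
    (j : Fin l) :
    euclideanCol (projCols A₁ B) j = (colSpace A₁).starProjection (euclideanCol B j) := rfl

lemma euclideanCol_projOrthCols (A₁ : Matrix (Fin m) (Fin k) ℝ) (B : Matrix (Fin m) (Fin l) ℝ)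
    (j : Fin l) :
    euclideanCol (projOrthCols A₁ B) j = (colSpace A₁)ᗮ.starProjection (euclideanCol B j) := rfl

lemma frobNorm_eq_sqrt_sum_norm_euclideanCol_sq (A : Matrix (Fin m) (Fin k) ℝ) :
    frobNorm A = √(∑ j, ‖euclideanCol A j‖ ^ 2) := by
  simp_rw [frobNorm, EuclideanSpace.norm_sq_eq, Real.norm_eq_abs, sq_abs]
  rw [Finset.sum_comm]
  rfl

lemma frobNorm_le_frobNorm_of_norm_euclideanCol_le {A B : Matrix (Fin m) (Fin k) ℝ}
    (h : ∀ j, ‖euclideanCol A j‖ ≤ ‖euclideanCol B j‖) : frobNorm A ≤ frobNorm B := by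
  rw [frobNorm_eq_sqrt_sum_norm_euclideanCol_sq, frobNorm_eq_sqrt_sum_norm_euclideanCol_sq]
  gcongr with j
  exact h j

end

/-- In the constrained low-rank approximation problem one may w.l.o.g. replace the
`P_{A₁}`-component of the second block by `P_{A₁}(A₂)`: if `rank (A₁ B₂) ≤ r`, then
`B₂' := P_{A₁}(A₂) + P⊥_{A₁}(B₂)` is still feasible and is at least as close to `A₂`. -/
theorem proj_replacement_improves
    (m k l r : ℕ)
    (A₁ : Matrix (Fin m) (Fin k) ℝ) (A₂ B₂ : Matrix (Fin m) (Fin l) ℝ)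
    (hrank : (Matrix.fromCols A₁ B₂).rank ≤ r)
    (B₂' : Matrix (Fin m) (Fin l) ℝ)
    (hB₂' : B₂' = projCols A₁ A₂ + projOrthCols A₁ B₂) :
    (Matrix.fromCols A₁ B₂').rank ≤ r ∧
    frobNorm (A₂ - B₂') ≤ frobNorm (A₂ - B₂) := by
  set K := colSpace A₁
  have hcol (j) : euclideanCol B₂' j =
      K.starProjection (euclideanCol A₂ j) + Kᗮ.starProjection (euclideanCol B₂ j) := by
    rw [hB₂', euclideanCol_add, euclideanCol_projCols, euclideanCol_projOrthCols]
  constructor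
  · refine le_trans (rank_le_rank_of_euclideanCol_mem fun j => ?_) hrank
    rw [range_euclideanCol_fromCols, Submodule.span_union, ← colSpace_eq_span_euclideanCol]
    rcases j with j | j
    · exact Submodule.mem_sup_left
        (colSpace_eq_span_euclideanCol A₁ ▸ Submodule.subset_span ⟨j, rfl⟩)
    · rw [euclideanCol_fromCols_inr, hcol, K.starProjection_add_starProjection_orthogonal_eq_add]
      exact add_mem (Submodule.mem_sup_right (Submodule.subset_span ⟨j, rfl⟩))
        (Submodule.mem_sup_left (K.starProjection_apply_mem _))
  · refine frobNorm_le_frobNorm_of_norm_euclideanCol_le fun j => ?_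
    rw [euclideanCol_sub, euclideanCol_sub, hcol,
      K.sub_starProjection_add_starProjection_orthogonal]
    exact Kᗮ.norm_starProjection_apply_le _
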